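/- Let S = ℤ/2[t₁, t₂], b₁ = t₁² + t₁t₂ + t₂², b₂ = t₂³. Then the quotient S/(b₁², b₂², b₁b₂) is a free module over ℤ/2 of dimension 18, with basis given by the images of the products m·e where m ranges over the 6 monomials t₁^a t₂^b (0 ≤ a ≤ 1, 0 ≤ b ≤ 2) and e ∈ {1, b₁, b₂}. -/

import Mathlib

/-!
The classes of `t₁^a t₂^b e` span: their span contains `1` and is stable under multiplication by
`t₂` and `t₁`, since `t₂³ = b₂`, `t₁² = b₁ + t₁t₂ + t₂²` in characteristic `2`, and every product of
two of `b₁, b₂` vanishes. They are independent: multiplication by `t₁` and `t₂`, written in these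
18 coordinates, gives two commuting endomorphisms of `(ℤ/2)¹⁸` that satisfy the relations, so
`ℤ/2[t₁, t₂]` acts on `(ℤ/2)¹⁸` through the quotient, and the orbit map of the first coordinate
vector sends the 18 classes to the standard basis.
-/

open MvPolynomial

/-- `b₁ = t₁² + t₁t₂ + t₂²` in `S = ℤ/2[t₁, t₂]` (with `t₁ = X 0`, `t₂ = X 1`). -/
noncomputable abbrev b1 : MvPolynomial (Fin 2) (ZMod 2) :=
  X 0 ^ 2 + X 0 * X 1 + X 1 ^ 2

/-- `b₂ = t₂³`. -/
noncomputable abbrev b2 : MvPolynomial (Fin 2) (ZMod 2) :=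
  X 1 ^ 3

/-- `S/(b₁², b₂², b₁b₂)`, modelling `CH*(X)/2` for the non-split `G₂` flag variety. -/
noncomputable abbrev ChowG2 : Type :=
  MvPolynomial (Fin 2) (ZMod 2) ⧸
    Ideal.span ({b1 ^ 2, b2 ^ 2, b1 * b2} : Set (MvPolynomial (Fin 2) (ZMod 2)))

section aevalOfCommute

open scoped IsMulCommutative

variable {R A σ : Type*} [CommSemiring R] [Semiring A] [Algebra R A]

noncomputable def MvPolynomial.aevalOfCommute (x : σ → A) (hx : ∀ i j, Commute (x i) (x j)) :
    MvPolynomial σ R →ₐ[R] A :=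
  haveI := Algebra.isMulCommutative_adjoin R (s := Set.range x) <| by
    rintro _ ⟨i, rfl⟩ _ ⟨j, rfl⟩
    exact hx i j
  (Algebra.adjoin R (Set.range x)).val.comp (aeval fun i => ⟨x i, Algebra.subset_adjoin ⟨i, rfl⟩⟩)

@[simp]
theorem MvPolynomial.aevalOfCommute_X (x : σ → A) (hx : ∀ i j, Commute (x i) (x j)) (i : σ) :
    aevalOfCommute (R := R) x hx (X i) = x i := by
  simp [aevalOfCommute]

end aevalOfCommute

namespace ChowG2

local notation "S" => MvPolynomial (Fin 2) (ZMod 2)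
local notation "I" => Ideal.span ({b1 ^ 2, b2 ^ 2, b1 * b2} : Set S)
local notation "E" => ![(1 : S), b1, b2]
local notation "V" => Fin 2 × Fin 3 × Fin 3 → ZMod 2

noncomputable def basisElem (p : Fin 2 × Fin 3 × Fin 3) : ChowG2 :=
  Ideal.Quotient.mk _ (X 0 ^ (p.1 : ℕ) * X 1 ^ (p.2.1 : ℕ) * ![1, b1, b2] p.2.2)

theorem X_zero_sq : (X 0 ^ 2 : S) = b1 + X 0 * X 1 + X 1 ^ 2 := by
  linear_combination -(X 0 * X 1 + X 1 ^ 2) * CharTwo.two_eq_zero (R := S)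

theorem b_mul_b_mem_ideal {i j : Fin 3} (hi : i ≠ 0) (hj : j ≠ 0) : E i * E j ∈ I := by
  fin_cases i <;> fin_cases j
  all_goals first
    | exact absurd rfl hi
    | exact absurd rfl hj
    | exact Ideal.subset_span (by simp [pow_two, mul_comm])

section span

local notation "W" => Submodule.span (ZMod 2) (Set.range basisElem)

theorem mk_mem_span {a b : ℕ} (ha : a < 2) (hb : b < 3) (e : Fin 3) :
    Ideal.Quotient.mk I (X 0 ^ a * X 1 ^ b * E e) ∈ W :=
  Submodule.subset_span ⟨(⟨a, ha⟩, ⟨b, hb⟩, e), rfl⟩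

theorem mk_b_mul_mem_span {a b : ℕ} (ha : a < 2) (hb : b < 3) {i : Fin 3} (hi : i ≠ 0)
    (e : Fin 3) : Ideal.Quotient.mk I (X 0 ^ a * X 1 ^ b * (E i * E e)) ∈ W := by
  by_cases he : e = 0
  · subst he
    simpa using mk_mem_span ha hb i
  · rw [Ideal.Quotient.eq_zero_iff_mem.2 (Ideal.mul_mem_left _ _ (b_mul_b_mem_ideal hi he))]
    exact zero_mem _

theorem mk_X_one_mul_mem_span {w : ChowG2} (hw : w ∈ W) :
    Ideal.Quotient.mk I (X 1) * w ∈ W := by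
  induction hw using Submodule.span_induction with
  | mem _ h =>
    obtain ⟨⟨a, ⟨b, hb⟩, e⟩, rfl⟩ := h
    rw [basisElem, ← map_mul]
    obtain hb' | rfl : b + 1 < 3 ∨ b = 2 := by omega
    · convert mk_mem_span a.2 hb' e using 2
      ring
    · convert mk_b_mul_mem_span a.2 (b := 0) (by norm_num) (i := 2) (by decide) e using 2
      simp only [Matrix.cons_val]
      ring
  | zero => simp
  | add _ _ _ _ h h' => rw [mul_add]; exact add_mem h h'
  | smul r _ _ h => rw [mul_smul_comm]; exact Submodule.smul_mem _ r h

theorem mk_X_zero_mul_mem_span {w : ChowG2} (hw : w ∈ W) :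
    Ideal.Quotient.mk I (X 0) * w ∈ W := by
  induction hw using Submodule.span_induction with
  | mem _ h =>
    obtain ⟨⟨⟨a, ha⟩, ⟨b, hb⟩, e⟩, rfl⟩ := h
    rw [basisElem, ← map_mul]
    obtain rfl | rfl : a = 0 ∨ a = 1 := by omega
    · convert mk_mem_span (a := 1) (by norm_num) hb e using 2
      ring
    · have hsq : X 0 * (X 0 ^ 1 * X 1 ^ b * E e) = X 0 ^ 0 * X 1 ^ b * (E 1 * E e) +
          X 1 * (X 0 ^ 1 * X 1 ^ b * E e) + X 1 * (X 1 * (X 0 ^ 0 * X 1 ^ b * E e)) := by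
        simp only [Matrix.cons_val]
        linear_combination X 1 ^ b * E e * X_zero_sq
      rw [hsq, map_add, map_add, map_mul, map_mul, map_mul]
      exact add_mem (add_mem (mk_b_mul_mem_span (by norm_num) hb (by decide) e)
        (mk_X_one_mul_mem_span (mk_mem_span (by norm_num) hb e)))
        (mk_X_one_mul_mem_span (mk_X_one_mul_mem_span (mk_mem_span (by norm_num) hb e)))
  | zero => simp
  | add _ _ _ _ h h' => rw [mul_add]; exact add_mem h h'
  | smul r _ _ h => rw [mul_smul_comm]; exact Submodule.smul_mem _ r h

theorem mk_mul_mem_span (f : S) {w : ChowG2} (hw : w ∈ W) : Ideal.Quotient.mk I f * w ∈ W := by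
  induction f using MvPolynomial.induction_on generalizing w with
  | C c =>
    rw [show Ideal.Quotient.mk I (C c) * w = c • w from (Algebra.smul_def c w).symm]
    exact Submodule.smul_mem _ c hw
  | add f g hf hg =>
    rw [map_add, add_mul (Ideal.Quotient.mk I f)]
    exact add_mem (hf hw) (hg hw)
  | mul_X f i hf =>
    rw [map_mul, mul_assoc (Ideal.Quotient.mk I f)]
    fin_cases i
    · exact hf (mk_X_zero_mul_mem_span hw)
    · exact hf (mk_X_one_mul_mem_span hw)

theorem span_basisElem : W = ⊤ := by
  refine eq_top_iff.2 fun w _ => ?_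
  obtain ⟨f, rfl⟩ := Ideal.Quotient.mk_surjective w
  have hone : (1 : ChowG2) ∈ W := by
    simpa using mk_mem_span (a := 0) (b := 0) (by norm_num) (by norm_num) 0
  simpa using mk_mul_mem_span f hone

end span

/- Coordinatewise: the `(a, 0, 2)`-coordinate of `t₂ · v` is the `(a, 2, 0)`-coordinate of `v`
because `t₂ · t₁^a t₂² = t₁^a b₂`, and `t₁ · (t₁ m) = b₁ m + t₂ (t₁ m) + t₂² m` for `m = t₂^b e`. -/
def modelMulX1 : Module.End (ZMod 2) V := LinearMap.pi fun
  | (a, 0, 2) => LinearMap.proj (a, 2, 0)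
  | (a, 1, e) => LinearMap.proj (a, 0, e)
  | (a, 2, e) => LinearMap.proj (a, 1, e)
  | _ => 0

def modelMulX0 : Module.End (ZMod 2) V := LinearMap.pi fun
  | (1, b, e) => LinearMap.proj (0, b, e) + LinearMap.proj (1, b, e) ∘ₗ modelMulX1
  | (0, b, 1) => LinearMap.proj (1, b, 0) + LinearMap.proj (1, b, 1) ∘ₗ modelMulX1 ^ 2
  | (0, b, e) => LinearMap.proj (1, b, e) ∘ₗ modelMulX1 ^ 2

theorem commute_modelMul (i j : Fin 2) :
    Commute (![modelMulX0, modelMulX1] i) (![modelMulX0, modelMulX1] j) := by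
  have h : modelMulX0 * modelMulX1 = modelMulX1 * modelMulX0 := LinearMap.pi_ext (by decide)
  fin_cases i <;> fin_cases j
  exacts [Commute.refl _, h, h.symm, Commute.refl _]

noncomputable def model : S →ₐ[ZMod 2] Module.End (ZMod 2) V :=
  aevalOfCommute ![modelMulX0, modelMulX1] commute_modelMul

theorem model_X (i : Fin 2) : model (X i) = ![modelMulX0, modelMulX1] i :=
  aevalOfCommute_X _ _ i

theorem ideal_le_ker_model : I ≤ RingHom.ker model := by
  rw [Ideal.span_le]
  rintro _ (rfl | rfl | rfl) <;>
  · simp only [SetLike.mem_coe, RingHom.mem_ker, map_add, map_mul, map_pow, model_X]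
    exact LinearMap.pi_ext (by decide)

noncomputable def coord : ChowG2 →ₗ[ZMod 2] V :=
  LinearMap.applyₗ (Pi.single 0 1) ∘ₗ
    (Ideal.Quotient.liftₐ I model ideal_le_ker_model).toLinearMap

theorem coord_mk (f : S) : coord (Ideal.Quotient.mk I f) = model f (Pi.single 0 1) := rfl

theorem coord_basisElem (p : Fin 2 × Fin 3 × Fin 3) : coord (basisElem p) = Pi.single p 1 := by
  obtain ⟨a, b, e⟩ := p
  rw [basisElem, coord_mk]
  fin_cases e <;>
    simp only [Fin.zero_eta, Fin.mk_one, Fin.reduceFinMk, Matrix.cons_val, mul_one, map_add, map_mul,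
      map_pow, model_X, Module.End.mul_apply, LinearMap.add_apply] <;>
    revert a b <;> decide

theorem linearIndependent_basisElem : LinearIndependent (ZMod 2) basisElem :=
  LinearIndependent.of_comp coord <| by
    convert (Pi.basisFun (ZMod 2) (Fin 2 × Fin 3 × Fin 3)).linearIndependent
    ext1 p
    simp [coord_basisElem]

end ChowG2

/-- `S/(b₁², b₂², b₁b₂)` is a free `ℤ/2`-module of dimension 18, with basis the
images of `t₁^a t₂^b · e` for `0 ≤ a ≤ 1`, `0 ≤ b ≤ 2`, `e ∈ {1, b₁, b₂}`. -/
theorem chow_ring_nonsplit_G2_flag :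
    (∃ B : Module.Basis (Fin 2 × Fin 3 × Fin 3) (ZMod 2) ChowG2,
      ∀ p : Fin 2 × Fin 3 × Fin 3,
        B p = Ideal.Quotient.mk _
          (X 0 ^ (p.1 : ℕ) * X 1 ^ (p.2.1 : ℕ) * ![1, b1, b2] p.2.2)) ∧
    Module.finrank (ZMod 2) ChowG2 = 18 := by
  let B := Module.Basis.mk ChowG2.linearIndependent_basisElem ChowG2.span_basisElem.ge
  exact ⟨⟨B, Module.Basis.mk_apply _ _⟩, (Module.finrank_eq_card_basis B).trans (by simp)⟩
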